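/- A pair (x̂, ŷ) with x̂ : V → ℝ and ŷ : E → ℝ satisfies: x̂ minimizes h over ℝ^V and ŷ maximizes the dual objective D over all feasible flows, if and only if all of the following hold: (a) −div_i(ŷ) = x̂_i − 1 for every seed node i ∈ S; (b) −div_i(ŷ) = α x̂_i for every non-seed node i ∉ S; (c) |ŷ_e| ≤ λ W_e for every edge e ∈ E; (d) for every oriented edge e = (i,j) ∈ E: if x̂_i > x̂_j then ŷ_e = λ W_e, and if x̂_i < x̂_j then ŷ_e = −λ W_e. -/

import Mathlib

open Finset

/-- Total variation of a graph signal `x` w.r.t. oriented edge set `E` and weights `W`. -/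
noncomputable def TV {n : ℕ} (E : Finset (Fin n × Fin n)) (W : Fin n × Fin n → ℝ)
    (x : Fin n → ℝ) : ℝ :=
  ∑ e ∈ E, W e * |x e.1 - x e.2|

/-- The network Lasso objective. -/
noncomputable def nLasso {n : ℕ} (E : Finset (Fin n × Fin n)) (W : Fin n × Fin n → ℝ)
    (S : Finset (Fin n)) (α lam : ℝ) (x : Fin n → ℝ) : ℝ :=
  ∑ i ∈ S, (x i - 1) ^ 2 / 2 + ∑ i ∈ Sᶜ, α * x i ^ 2 / 2 + lam * TV E W x

/-- Divergence of the flow `y` at node `i`: outgoing minus incoming flow. -/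
noncomputable def divg {n : ℕ} (E : Finset (Fin n × Fin n)) (y : Fin n × Fin n → ℝ)
    (i : Fin n) : ℝ :=
  ∑ e ∈ E.filter (fun e => e.1 = i), y e - ∑ e ∈ E.filter (fun e => e.2 = i), y e

/-- The dual (flow) objective of the network Lasso. -/
noncomputable def dualObj {n : ℕ} (E : Finset (Fin n × Fin n)) (S : Finset (Fin n))
    (α : ℝ) (y : Fin n × Fin n → ℝ) : ℝ :=
  -∑ i ∈ S, (divg E y i ^ 2 / 2 - divg E y i) - ∑ i ∈ Sᶜ, divg E y i ^ 2 / (2 * α)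

/-- The boundary of a node set `C`: edges with exactly one endpoint in `C`. -/
def bdry {n : ℕ} (E : Finset (Fin n × Fin n)) (C : Finset (Fin n)) :
    Finset (Fin n × Fin n) :=
  E.filter (fun e => (e.1 ∈ C ∧ e.2 ∉ C) ∨ (e.1 ∉ C ∧ e.2 ∈ C))

/-!
For a feasible flow `y`, completing the squares at the nodes and using `|y e| ≤ lam * W e` on the
edges writes the duality gap `nLasso x - dualObj y` as a sum of nonnegative terms, which vanish
exactly under conditions (a), (b), (d). This gives weak duality and the reverse implication.
Conversely, let `x₀` be the signal read off `ŷ` through (a) and (b). Moving the flow on one edge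
`e` by `t` changes the concave quadratic `dualObj` by `t * (x₀ e.1 - x₀ e.2) - K * t ^ 2` with
`K ≥ 0`, so dual optimality of `ŷ` forces (d) for `x₀`. Hence `nLasso x₀ = dualObj ŷ`, which by
weak duality is also `nLasso x̂`, and the gap at `(x̂, ŷ)` vanishes.
-/

theorem eq_endpoint_of_forall_mul_sub_sq_nonpos {y r g K : ℝ} (hK : 0 ≤ K) (hy : |y| ≤ r)
    (hmax : ∀ t, |y + t| ≤ r → t * g - K * t ^ 2 ≤ 0) :
    (0 < g → y = r) ∧ (g < 0 → y = -r) := by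
  suffices key : ∀ y g, |y| ≤ r → (∀ t, |y + t| ≤ r → t * g - K * t ^ 2 ≤ 0) → 0 < g → y = r by
    refine ⟨key y g hy hmax, fun hg => ?_⟩
    have hneg := key (-y) (-g) (by rwa [abs_neg]) (fun t ht => ?_) (by linarith)
    · linarith
    · have := hmax (-t) (by rwa [← abs_neg, neg_add, neg_neg])
      linarith
  intro y g hy hmax hg
  by_contra hne
  obtain ⟨hyl, hyu⟩ := abs_le.mp hy
  have hlt : y < r := lt_of_le_of_ne hyu hne
  set t := min (r - y) (g / (K + 1))
  have ht : 0 < t := lt_min (by linarith) (by positivity)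
  have htK : t * K < g :=
    calc t * K ≤ g / (K + 1) * K := mul_le_mul_of_nonneg_right (min_le_right _ _) hK
      _ < g := by rw [div_mul_eq_mul_div, div_lt_iff₀ (by positivity)]; nlinarith
  have := hmax t (abs_le.mpr ⟨by linarith, by linarith [min_le_left (r - y) (g / (K + 1))]⟩)
  nlinarith

theorem mul_le_mul_abs_of_abs_le {y c : ℝ} (hy : |y| ≤ c) (d : ℝ) : y * d ≤ c * |d| :=
  calc y * d ≤ |y| * |d| := abs_mul y d ▸ le_abs_self _
    _ ≤ c * |d| := mul_le_mul_of_nonneg_right hy (abs_nonneg d)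

theorem mul_abs_sub_mul_eq_zero_iff {y c d : ℝ} :
    c * |d| - y * d = 0 ↔ (0 < d → y = c) ∧ (d < 0 → y = -c) := by
  rcases lt_trichotomy d 0 with hd | rfl | hd
  · rw [abs_of_neg hd]
    refine ⟨fun h => ⟨fun h' => absurd hd h'.not_gt, fun _ => ?_⟩, fun h => by rw [h.2 hd]; ring⟩
    have : (c + y) * d = 0 := by linarith
    linarith [(mul_eq_zero.mp this).resolve_right hd.ne]
  · simp
  · rw [abs_of_pos hd]
    refine ⟨fun h => ⟨fun _ => ?_, fun h' => absurd hd h'.not_gt⟩, fun h => by rw [h.1 hd]; ring⟩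
    have : (c - y) * d = 0 := by linarith
    linarith [(mul_eq_zero.mp this).resolve_right hd.ne']

section

variable {n : ℕ} (E : Finset (Fin n × Fin n))

theorem sum_mul_divg (y : Fin n × Fin n → ℝ) (f : Fin n → ℝ) :
    ∑ i, f i * divg E y i = ∑ e ∈ E, y e * (f e.1 - f e.2) := by
  have hfiber : ∀ p : Fin n × Fin n → Fin n,
      ∑ i, f i * ∑ e ∈ E with p e = i, y e = ∑ e ∈ E, y e * f (p e) := by
    intro p
    rw [← sum_fiberwise E p (fun e => y e * f (p e))]
    refine sum_congr rfl fun i _ => ?_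
    rw [mul_sum]
    refine sum_congr rfl fun e he => ?_
    rw [(mem_filter.mp he).2, mul_comm]
  simp only [divg, mul_sub, sum_sub_distrib]
  rw [hfiber Prod.fst, hfiber Prod.snd]

theorem divg_add_smul (y v : Fin n × Fin n → ℝ) (t : ℝ) (i : Fin n) :
    divg E (y + t • v) i = divg E y i + t * divg E v i := by
  simp only [divg, Pi.add_apply, Pi.smul_apply, smul_eq_mul, sum_add_distrib, ← mul_sum]
  ring

variable (S : Finset (Fin n)) {α : ℝ}

noncomputable def primalOfFlow (α : ℝ) (y : Fin n × Fin n → ℝ) (i : Fin n) : ℝ :=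
  if i ∈ S then 1 - divg E y i else -divg E y i / α

theorem dualObj_add_smul (hα : α ≠ 0) (y v : Fin n × Fin n → ℝ) (t : ℝ) :
    dualObj E S α (y + t • v) = dualObj E S α y
      + t * ∑ e ∈ E, v e * (primalOfFlow E S α y e.1 - primalOfFlow E S α y e.2)
      - t ^ 2 * (∑ i ∈ S, divg E v i ^ 2 / 2 + ∑ i ∈ Sᶜ, divg E v i ^ 2 / (2 * α)) := by
  set x := primalOfFlow E S α y
  have hS : ∀ i ∈ S, (divg E y i + t * divg E v i) ^ 2 / 2 - (divg E y i + t * divg E v i)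
      = (divg E y i ^ 2 / 2 - divg E y i) - t * (x i * divg E v i)
        + t ^ 2 * (divg E v i ^ 2 / 2) := by
    intro i hi
    simp only [x, primalOfFlow, if_pos hi]
    ring
  have hSc : ∀ i ∈ Sᶜ, (divg E y i + t * divg E v i) ^ 2 / (2 * α)
      = divg E y i ^ 2 / (2 * α) - t * (x i * divg E v i)
        + t ^ 2 * (divg E v i ^ 2 / (2 * α)) := by
    intro i hi
    simp only [x, primalOfFlow, if_neg (mem_compl.mp hi)]
    field_simp
    ring
  rw [← sum_mul_divg, ← sum_add_sum_compl S]
  simp only [dualObj, divg_add_smul]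
  rw [sum_congr rfl hS, sum_congr rfl hSc]
  simp only [sum_add_distrib, sum_sub_distrib, ← mul_sum]
  ring

variable (W : Fin n × Fin n → ℝ) (lam : ℝ)

theorem nLasso_sub_dualObj (hα : α ≠ 0) (x : Fin n → ℝ) (y : Fin n × Fin n → ℝ) :
    nLasso E W S α lam x - dualObj E S α y =
      ∑ i ∈ S, (x i - 1 + divg E y i) ^ 2 / 2
      + ∑ i ∈ Sᶜ, (α * x i + divg E y i) ^ 2 / (2 * α)
      + ∑ e ∈ E, (lam * W e * |x e.1 - x e.2| - y e * (x e.1 - x e.2)) := by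
  have hsbp := sum_mul_divg E y x
  rw [← sum_add_sum_compl S] at hsbp
  have hS : ∀ i ∈ S, (x i - 1 + divg E y i) ^ 2 / 2
      = (x i - 1) ^ 2 / 2 + (divg E y i ^ 2 / 2 - divg E y i) + x i * divg E y i := by
    intro i _
    ring
  have hSc : ∀ i ∈ Sᶜ, (α * x i + divg E y i) ^ 2 / (2 * α)
      = α * x i ^ 2 / 2 + divg E y i ^ 2 / (2 * α) + x i * divg E y i := by
    intro i _
    field_simp
    ring
  have hTV : ∑ e ∈ E, lam * W e * |x e.1 - x e.2| = lam * TV E W x := by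
    simp only [TV, mul_sum, mul_assoc]
  rw [sum_congr rfl hS, sum_congr rfl hSc, sum_sub_distrib, hTV, ← hsbp]
  simp only [nLasso, dualObj, sum_add_distrib]
  ring

variable {E S W lam}

theorem dualObj_le_nLasso (hα : 0 < α) {y : Fin n × Fin n → ℝ}
    (hy : ∀ e ∈ E, |y e| ≤ lam * W e) (x : Fin n → ℝ) :
    dualObj E S α y ≤ nLasso E W S α lam x := by
  rw [← sub_nonneg, nLasso_sub_dualObj E S W lam hα.ne']
  refine add_nonneg (add_nonneg (sum_nonneg fun i _ => by positivity)
    (sum_nonneg fun i _ => by positivity)) (sum_nonneg fun e he => ?_)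
  exact sub_nonneg.mpr (mul_le_mul_abs_of_abs_le (hy e he) _)

theorem nLasso_eq_dualObj_iff (hα : 0 < α) {y : Fin n × Fin n → ℝ}
    (hy : ∀ e ∈ E, |y e| ≤ lam * W e) (x : Fin n → ℝ) :
    nLasso E W S α lam x = dualObj E S α y ↔
      (∀ i ∈ S, -divg E y i = x i - 1) ∧ (∀ i ∉ S, -divg E y i = α * x i) ∧
      (∀ e ∈ E, (x e.1 > x e.2 → y e = lam * W e) ∧ (x e.1 < x e.2 → y e = -(lam * W e))) := by
  have hS : ∀ i ∈ S, 0 ≤ (x i - 1 + divg E y i) ^ 2 / 2 := fun i _ => by positivity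
  have hSc : ∀ i ∈ Sᶜ, 0 ≤ (α * x i + divg E y i) ^ 2 / (2 * α) := fun i _ => by positivity
  have hE : ∀ e ∈ E, 0 ≤ lam * W e * |x e.1 - x e.2| - y e * (x e.1 - x e.2) :=
    fun e he => sub_nonneg.mpr (mul_le_mul_abs_of_abs_le (hy e he) _)
  rw [← sub_eq_zero, nLasso_sub_dualObj E S W lam hα.ne',
    add_eq_zero_iff_of_nonneg (add_nonneg (sum_nonneg hS) (sum_nonneg hSc)) (sum_nonneg hE),
    add_eq_zero_iff_of_nonneg (sum_nonneg hS) (sum_nonneg hSc), sum_eq_zero_iff_of_nonneg hS,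
    sum_eq_zero_iff_of_nonneg hSc, sum_eq_zero_iff_of_nonneg hE]
  simp only [mem_compl]
  refine and_assoc.trans (and_congr (forall₂_congr fun i _ => ?_)
    (and_congr (forall₂_congr fun i _ => ?_) (forall₂_congr fun e _ => ?_)))
  · rw [div_eq_zero_iff, or_iff_left two_ne_zero, pow_eq_zero_iff two_ne_zero]
    constructor <;> intro h <;> linarith
  · rw [div_eq_zero_iff, or_iff_left (by positivity), pow_eq_zero_iff two_ne_zero]
    constructor <;> intro h <;> linarith
  · rw [mul_abs_sub_mul_eq_zero_iff, sub_pos, sub_neg]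

theorem edge_saturated_of_dual_optimal (hα : 0 < α) {y : Fin n × Fin n → ℝ}
    (hy : ∀ e ∈ E, |y e| ≤ lam * W e)
    (hmax : ∀ y' : Fin n × Fin n → ℝ, (∀ e ∈ E, |y' e| ≤ lam * W e) →
      dualObj E S α y' ≤ dualObj E S α y)
    {e : Fin n × Fin n} (he : e ∈ E) :
    (primalOfFlow E S α y e.1 > primalOfFlow E S α y e.2 → y e = lam * W e) ∧
      (primalOfFlow E S α y e.1 < primalOfFlow E S α y e.2 → y e = -(lam * W e)) := by
  set x := primalOfFlow E S α y
  set δ : Fin n × Fin n → ℝ := Pi.single e 1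
  have hK : 0 ≤ ∑ i ∈ S, divg E δ i ^ 2 / 2 + ∑ i ∈ Sᶜ, divg E δ i ^ 2 / (2 * α) := by
    positivity
  have hδ : ∑ e' ∈ E, δ e' * (x e'.1 - x e'.2) = x e.1 - x e.2 := by
    rw [sum_eq_single_of_mem e he fun e' _ hne => by simp [δ, hne]]
    simp [δ]
  simp only [gt_iff_lt, ← sub_pos (b := x e.2), ← sub_neg (b := x e.2)]
  refine eq_endpoint_of_forall_mul_sub_sq_nonpos hK (hy e he) fun t ht => ?_
  have hfeas : ∀ e' ∈ E, |(y + t • δ) e'| ≤ lam * W e' := by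
    intro e' he'
    rcases eq_or_ne e' e with rfl | hne
    · simpa [δ] using ht
    · simpa [δ, hne] using hy e' he'
  have := hmax _ hfeas
  rw [dualObj_add_smul E S hα.ne', hδ] at this
  linarith

end

theorem nLasso_primal_dual_optimality_iff_general
    (n : ℕ) (E : Finset (Fin n × Fin n))
    (W : Fin n × Fin n → ℝ)
    (S : Finset (Fin n))
    (α lam : ℝ) (hα : 0 < α)
    (xhat : Fin n → ℝ) (yhat : Fin n × Fin n → ℝ) :
    ((∀ z : Fin n → ℝ, nLasso E W S α lam xhat ≤ nLasso E W S α lam z) ∧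
     (∀ e ∈ E, |yhat e| ≤ lam * W e) ∧
     (∀ y : Fin n × Fin n → ℝ, (∀ e ∈ E, |y e| ≤ lam * W e) →
       dualObj E S α y ≤ dualObj E S α yhat))
    ↔
    ((∀ i ∈ S, -divg E yhat i = xhat i - 1) ∧
     (∀ i ∉ S, -divg E yhat i = α * xhat i) ∧
     (∀ e ∈ E, |yhat e| ≤ lam * W e) ∧
     (∀ e ∈ E, (xhat e.1 > xhat e.2 → yhat e = lam * W e) ∧
               (xhat e.1 < xhat e.2 → yhat e = -(lam * W e)))) := by
  constructor
  · rintro ⟨hmin, hfeas, hmax⟩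
    set x₀ := primalOfFlow E S α yhat
    have hgap₀ : nLasso E W S α lam x₀ = dualObj E S α yhat := by
      refine (nLasso_eq_dualObj_iff hα hfeas x₀).2 ⟨fun i hi => ?_, fun i hi => ?_,
        fun e he => edge_saturated_of_dual_optimal hα hfeas hmax he⟩
      · simp only [x₀, primalOfFlow, if_pos hi]
        ring
      · simp only [x₀, primalOfFlow, if_neg hi]
        field_simp
    have hgap : nLasso E W S α lam xhat = dualObj E S α yhat :=
      le_antisymm (hgap₀ ▸ hmin x₀) (dualObj_le_nLasso hα hfeas xhat)
    obtain ⟨ha, hb, hd⟩ := (nLasso_eq_dualObj_iff hα hfeas xhat).1 hgap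
    exact ⟨ha, hb, hfeas, hd⟩
  · rintro ⟨ha, hb, hfeas, hd⟩
    have hgap := (nLasso_eq_dualObj_iff hα hfeas xhat).2 ⟨ha, hb, hd⟩
    exact ⟨fun z => hgap ▸ dualObj_le_nLasso hα hfeas z, hfeas,
      fun y hy => hgap ▸ dualObj_le_nLasso hα hy xhat⟩

/-- Primal-dual optimality conditions: `x̂` minimizes the nLasso objective and
`ŷ` maximizes the dual objective over feasible flows iff conditions (a)-(d) hold. -/
theorem nLasso_primal_dual_optimality_iff
    (n : ℕ) (E : Finset (Fin n × Fin n)) (hE : ∀ e ∈ E, e.1 < e.2)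
    (W : Fin n × Fin n → ℝ) (hW : ∀ e ∈ E, 0 < W e)
    (S : Finset (Fin n)) (hS : S.Nonempty)
    (α lam : ℝ) (hα : 0 < α) (hlam : 0 < lam)
    (xhat : Fin n → ℝ) (yhat : Fin n × Fin n → ℝ) :
    ((∀ z : Fin n → ℝ, nLasso E W S α lam xhat ≤ nLasso E W S α lam z) ∧
     (∀ e ∈ E, |yhat e| ≤ lam * W e) ∧
     (∀ y : Fin n × Fin n → ℝ, (∀ e ∈ E, |y e| ≤ lam * W e) →
       dualObj E S α y ≤ dualObj E S α yhat))
    ↔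
    ((∀ i ∈ S, -divg E yhat i = xhat i - 1) ∧
     (∀ i ∉ S, -divg E yhat i = α * xhat i) ∧
     (∀ e ∈ E, |yhat e| ≤ lam * W e) ∧
     (∀ e ∈ E, (xhat e.1 > xhat e.2 → yhat e = lam * W e) ∧
               (xhat e.1 < xhat e.2 → yhat e = -(lam * W e)))) :=
  nLasso_primal_dual_optimality_iff_general n E W S α lam hα xhat yhat
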